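/- Let Φ ⊂ ℂ be a finite set with at least two elements, let M be an even positive integer, let Θ be uniform on {2πl/M : l = 0,…,M−1}, and let N be a circularly symmetric complex Gaussian with variance σ² > 0. Suppose, for contradiction, that (F(·|s))_{s∈Φ} is a family of probability measures on ℂ such that for all s, s′ ∈ Φ the law of s + X′e^{iΘ} + N equals the law of s′ + Xe^{iΘ} + N, where X ~ F(·|s), X′ ~ F(·|s′), Θ, N are mutually independent. Then for every pair s ≠ s′ in Φ, writing s = s₁ + is₂ and s′ = s₁′ + is₂′, the characteristic function φ(ω₁,ω₂) = E[exp(i(ω₁ Re(Xe^{iΘ}) + ω₂ Im(Xe^{iΘ})))] of Xe^{iΘ} with X ~ F(·|s) vanishes at every (ω₁,ω₂) ∈ ℝ² with (s₁ − s₁′)ω₁ + (s₂ − s₂′)ω₂ ∉ πℤ. -/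

import Mathlib

open MeasureTheory ProbabilityTheory
open scoped NNReal ENNReal

/-- The law of a circularly symmetric complex Gaussian random variable with variance `v`. -/
noncomputable def gaussComplexLaw (v : ℝ≥0) : Measure ℂ :=
  ((gaussianReal 0 (v / 2)).prod (gaussianReal 0 (v / 2))).map
    (fun p : ℝ × ℝ => (p.1 : ℂ) + p.2 * Complex.I)

/-- The uniform distribution on the phase set `{2πl/M : l = 0, 1, …, M−1}`. -/
noncomputable def phaseLaw (M : ℕ) : Measure ℝ :=
  (M : ℝ≥0∞)⁻¹ • ∑ l ∈ Finset.range M, Measure.dirac (2 * Real.pi * l / M)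

/-- The characteristic function of a complex-valued distribution `ν`, evaluated at
`(ω₁, ω₂) ∈ ℝ²`: `φ_ν(ω₁,ω₂) = E[exp(i(ω₁ Re X + ω₂ Im X))]` for `X ~ ν`. -/
noncomputable def charFunC (ν : Measure ℂ) (w : ℝ × ℝ) : ℂ :=
  ∫ z, Complex.exp (Complex.I * ((w.1 * z.re + w.2 * z.im : ℝ) : ℂ)) ∂ν

/-! Taking characteristic functions at `t = w.1 + w.2 i`, the hypothesis reads
`φ_{s'}(t) γ(t) e^{i⟨s,t⟩} = φ_s(t) γ(t) e^{i⟨s',t⟩}`, where `φ_s` is the characteristic function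
of `Xe^{iΘ}` with `X ~ F(·|s)` and `γ(t) = e^{-v|t|²/4}` that of the Gaussian noise. Cancelling
`γ(t) ≠ 0` gives `φ_s(t) = e^{i⟨s-s',t⟩} φ_{s'}(t)`. As `M` is even, `e^{i(Θ+π)} = -e^{iΘ}` has the
law of `e^{iΘ}`, so `Xe^{iΘ}` is symmetric and `φ_s(t)`, `φ_{s'}(t)` are real. The imaginary part
of the identity is then `sin⟨s-s',t⟩ φ_{s'}(t) = 0`, and off the lines `⟨s-s',t⟩ ∈ πℤ` this forces
`φ_{s'}(t) = 0`, hence `φ_s(t) = 0`. -/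

open Complex Finset Function

theorem Function.Periodic.sum_range_add {A : Type*} [AddCommMonoid A] {h : ℕ → A} {M : ℕ}
    (hh : Periodic h M) (k : ℕ) : ∑ l ∈ range M, h (l + k) = ∑ l ∈ range M, h l := by
  calc ∑ l ∈ range M, h (l + k) = ∑ l ∈ Ico k (k + M), h (l % M) := by
        simp [sum_Ico_eq_sum_range, hh.map_mod_nat, add_comm k]
    _ = ∑ l ∈ range M, h l := by
        rw [← Nat.image_Ico_mod k M, sum_image (Nat.mod_injOn_Ico k M)]

theorem Complex.inner_eq_re_mul_re_add_im_mul_im (z t : ℂ) :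
    inner ℝ z t = z.re * t.re + z.im * t.im := by
  rw [Complex.inner, mul_re, conj_re, conj_im]
  ring

theorem charFunC_eq_charFun (ν : Measure ℂ) (w : ℝ × ℝ) :
    charFunC ν w = charFun ν ⟨w.1, w.2⟩ := by
  simp only [charFunC, charFun_apply, inner_eq_re_mul_re_add_im_mul_im, mul_comm I,
    mul_comm w.1, mul_comm w.2]

theorem isProbabilityMeasure_phaseLaw {M : ℕ} (hM : 0 < M) :
    IsProbabilityMeasure (phaseLaw M) := by
  constructor
  simp only [phaseLaw, Measure.smul_apply, Measure.coe_finsetSum, Finset.sum_apply,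
    measure_univ, sum_const, card_range, nsmul_eq_mul, mul_one, smul_eq_mul]
  exact ENNReal.inv_mul_cancel (by exact_mod_cast hM.ne') (ENNReal.natCast_ne_top M)

instance (v : ℝ≥0) : IsProbabilityMeasure (gaussComplexLaw v) :=
  Measure.isProbabilityMeasure_map (by fun_prop)

theorem map_phaseLaw {α : Type*} [MeasurableSpace α] {f : ℝ → α} (hf : Measurable f) (M : ℕ) :
    (phaseLaw M).map f =
      (M : ℝ≥0∞)⁻¹ • ∑ l ∈ range M, Measure.dirac (f (2 * Real.pi * l / M)) := by
  simp [phaseLaw, Measure.map_smul, Measure.map_finset_sum hf.aemeasurable,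
    Measure.map_dirac' hf]

theorem map_neg_cexp_phaseLaw {M : ℕ} (hM : Even M) :
    (phaseLaw M).map (fun θ : ℝ => -cexp (I * θ)) =
      (phaseLaw M).map (fun θ : ℝ => cexp (I * θ)) := by
  obtain ⟨m, rfl⟩ := hM
  rcases m.eq_zero_or_pos with rfl | hm
  · simp [phaseLaw]
  have hm' : (m : ℝ) ≠ 0 := by positivity
  let a : ℕ → ℂ := fun l => cexp (I * ↑(2 * Real.pi * l / (m + m : ℕ)))
  have ha : ∀ l k : ℕ, a (l + k) = a l * cexp (↑(Real.pi * k / m) * I) := by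
    intro l k
    simp only [a, ← Complex.exp_add]
    congr 1
    push_cast
    field_simp
    ring
  have hshift : ∀ l, a (l + m) = -a l := fun l => by
    rw [ha, mul_div_assoc, div_self hm', mul_one, exp_pi_mul_I, mul_neg_one]
  have hper : Periodic (fun l => Measure.dirac (a l)) (m + m) := fun l => by
    have h2pi : Real.pi * ((m + m : ℕ) : ℝ) / m = 2 * Real.pi := by push_cast; field_simp; ring
    simp only [ha, h2pi, ofReal_mul, ofReal_ofNat, exp_two_pi_mul_I, mul_one]
  rw [map_phaseLaw (by fun_prop), map_phaseLaw (by fun_prop), ← hper.sum_range_add m]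
  simp only [hshift, a]

theorem map_neg_map_mul_cexp {μ : Measure ℂ} {P : Measure ℝ} [SFinite μ] [SFinite P]
    (hP : P.map (fun θ : ℝ => -cexp (I * θ)) = P.map (fun θ : ℝ => cexp (I * θ))) :
    ((μ.prod P).map (fun q : ℂ × ℝ => q.1 * cexp (I * q.2))).map Neg.neg =
      (μ.prod P).map (fun q : ℂ × ℝ => q.1 * cexp (I * q.2)) := by
  have hlaw : ∀ e : ℝ → ℂ, Measurable e →
      (μ.prod P).map (fun q : ℂ × ℝ => q.1 * e q.2) =
        (μ.prod (P.map e)).map (fun p => p.1 * p.2) := by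
    intro e he
    have hprod := Measure.map_prod_map μ P measurable_id he
    rw [Measure.map_id] at hprod
    rw [hprod, Measure.map_map (by fun_prop) (by fun_prop)]
    rfl
  rw [Measure.map_map (by fun_prop) (by fun_prop)]
  simp only [Function.comp_def, ← mul_neg]
  rw [hlaw (fun θ : ℝ => -cexp (I * θ)) (by fun_prop),
    hlaw (fun θ : ℝ => cexp (I * θ)) (by fun_prop), hP]

theorem im_charFun_eq_zero_of_map_neg {E : Type*} [NormedAddCommGroup E] [InnerProductSpace ℝ E]
    [MeasurableSpace E] [BorelSpace E] {ν : Measure E} (hν : ν.map Neg.neg = ν) (t : E) :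
    (charFun ν t).im = 0 := by
  rw [← conj_eq_iff_im, ← charFun_neg, ← neg_one_smul ℝ t, ← charFun_map_smul]
  simp only [neg_one_smul]
  exact congrArg (charFun · t) hν

theorem map_add_prod_eq_conv {α β E : Type*} [MeasurableSpace α] [MeasurableSpace β]
    [AddMonoid E] [MeasurableSpace E] [MeasurableAdd₂ E] {g : α × β → E} (hg : Measurable g)
    (μ : Measure α) (ν : Measure β) (G : Measure E) [SFinite μ] [SFinite ν] [SFinite G] :
    (μ.prod (ν.prod G)).map (fun q => g (q.1, q.2.1) + q.2.2) = ((μ.prod ν).map g) ∗ G := by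
  have hprod := Measure.map_prod_map (μ.prod ν) G hg measurable_id
  rw [Measure.map_id] at hprod
  rw [← Measure.prodAssoc_prod, Measure.map_map (by fun_prop) (by fun_prop), Measure.conv, hprod,
    Measure.map_map (by fun_prop) (by fun_prop)]
  rfl

theorem charFun_gaussComplexLaw (v : ℝ≥0) (t : ℂ) :
    charFun (gaussComplexLaw v) t = cexp (-(v * ‖t‖ ^ 2 / 4)) := by
  have hsplit : ∀ p : ℝ × ℝ, cexp ((inner ℝ ((p.1 : ℂ) + p.2 * I) t : ℝ) * I) =
      cexp (t.re * p.1 * I) * cexp (t.im * p.2 * I) := by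
    intro p
    rw [← Complex.exp_add, inner_eq_re_mul_re_add_im_mul_im]
    congr 1
    simp only [add_re, ofReal_re, mul_re, I_re, ofReal_im, I_im, add_im, mul_im]
    push_cast
    ring
  rw [gaussComplexLaw, charFun_apply, integral_map (by fun_prop) (by fun_prop)]
  simp_rw [hsplit]
  rw [integral_prod_mul (f := fun x : ℝ => cexp (t.re * x * I))
      (g := fun x : ℝ => cexp (t.im * x * I)), ← charFun_apply_real, ← charFun_apply_real,
    charFun_gaussianReal, charFun_gaussianReal, ← Complex.exp_add]
  congr 1
  have hnorm : ((‖t‖ : ℝ) : ℂ) ^ 2 = (t.re : ℂ) ^ 2 + (t.im : ℂ) ^ 2 := by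
    rw [← ofReal_pow, ← normSq_eq_norm_sq, normSq_apply]
    push_cast
    ring
  rw [hnorm]
  push_cast
  ring

theorem charFun_map_channel (c : ℂ) (μ : Measure ℂ) (P : Measure ℝ) (G : Measure ℂ)
    [IsFiniteMeasure μ] [IsFiniteMeasure P] [IsFiniteMeasure G] (t : ℂ) :
    charFun ((μ.prod (P.prod G)).map
        (fun q : ℂ × ℝ × ℂ => c + q.1 * cexp (I * q.2.1) + q.2.2)) t =
      charFun ((μ.prod P).map (fun q : ℂ × ℝ => q.1 * cexp (I * q.2))) t * charFun G t *
        cexp (inner ℝ c t * I) := by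
  have hsplit : (fun q : ℂ × ℝ × ℂ => c + q.1 * cexp (I * q.2.1) + q.2.2) =
      (c + ·) ∘ fun q => (fun p : ℂ × ℝ => p.1 * cexp (I * p.2)) (q.1, q.2.1) + q.2.2 := by
    funext q
    simp only [Function.comp_apply, add_assoc]
  rw [hsplit, ← Measure.map_map (by fun_prop) (by fun_prop),
    map_add_prod_eq_conv (g := fun p : ℂ × ℝ => p.1 * cexp (I * p.2)) (by fun_prop),
    charFun_map_const_add, charFun_conv]

theorem eq_zero_of_eq_exp_mul_I_mul {a b : ℂ} {α : ℝ} (ha : a.im = 0) (hb : b.im = 0)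
    (hα : Real.sin α ≠ 0) (h : a = cexp (α * I) * b) : a = 0 := by
  have hbre : b.re = 0 := by
    have him := congrArg Complex.im h
    rw [ha, mul_im, exp_ofReal_mul_I_re, exp_ofReal_mul_I_im, hb] at him
    simpa [hα] using him
  rw [h, show b = 0 from Complex.ext hbre hb, mul_zero]

theorem symmetrizing_kernel_charFun_vanishes_off_lines_general
    (Φ : Finset ℂ)
    (M : ℕ) (hM : 0 < M) (hMeven : Even M) (v : ℝ≥0)
    (F : ℂ → Measure ℂ) (hF : ∀ s ∈ Φ, IsProbabilityMeasure (F s))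
    (hsym : ∀ s ∈ Φ, ∀ s' ∈ Φ,
      Measure.map (fun q : ℂ × ℝ × ℂ => s + q.1 * Complex.exp (Complex.I * q.2.1) + q.2.2)
        ((F s').prod ((phaseLaw M).prod (gaussComplexLaw v))) =
      Measure.map (fun q : ℂ × ℝ × ℂ => s' + q.1 * Complex.exp (Complex.I * q.2.1) + q.2.2)
        ((F s).prod ((phaseLaw M).prod (gaussComplexLaw v)))) :
    ∀ s ∈ Φ, ∀ s' ∈ Φ, s ≠ s' →
      ∀ w : ℝ × ℝ,
        (∀ n : ℤ, (s.re - s'.re) * w.1 + (s.im - s'.im) * w.2 ≠ n * Real.pi) →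
        charFunC
          (Measure.map (fun q : ℂ × ℝ => q.1 * Complex.exp (Complex.I * q.2))
            ((F s).prod (phaseLaw M))) w = 0 := by
  intro s hs s' hs' _ w hw
  have := hF s hs
  have := hF s' hs'
  have := isProbabilityMeasure_phaseLaw hM
  set t : ℂ := ⟨w.1, w.2⟩
  have hreal : ∀ (μ : Measure ℂ) [SFinite μ],
      (charFun ((μ.prod (phaseLaw M)).map (fun q : ℂ × ℝ => q.1 * cexp (I * q.2))) t).im = 0 :=
    fun _ _ => im_charFun_eq_zero_of_map_neg
      (map_neg_map_mul_cexp (map_neg_cexp_phaseLaw hMeven)) t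
  have hout := congrArg (charFun · t) (hsym s hs s' hs')
  rw [charFun_map_channel, charFun_map_channel] at hout
  have hG : charFun (gaussComplexLaw v) t ≠ 0 := by
    rw [charFun_gaussComplexLaw]
    exact exp_ne_zero _
  rw [charFunC_eq_charFun]
  refine eq_zero_of_eq_exp_mul_I_mul (α := inner ℝ (s - s') t) (hreal (F s)) (hreal (F s')) ?_ ?_
  · rw [Ne, Real.sin_eq_zero_iff, not_exists]
    exact fun n hn => hw n (by rw [hn, inner_eq_re_mul_re_add_im_mul_im, sub_re, sub_im])
  · rw [inner_sub_left, ofReal_sub, sub_mul, Complex.exp_sub, div_mul_eq_mul_div,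
      eq_div_iff (exp_ne_zero _)]
    apply mul_right_cancel₀ hG
    linear_combination hout.symm

/-- If a family `F (·|s)` of probability measures symmetrized the SP-OFDM channel, i.e.
for all `s, s' ∈ Φ` the law of `s + X'e^{iΘ} + N` (with `X' ~ F(·|s')`, `Θ` uniform `M`-PSK,
`N` circularly symmetric complex Gaussian, mutually independent) equals the law of
`s' + Xe^{iΘ} + N` (with `X ~ F(·|s)`), then for every `s ≠ s'` in `Φ` the characteristic
function of `Xe^{iΘ}` with `X ~ F(·|s)` vanishes at every `(ω₁,ω₂)` with
`(s₁−s₁′)ω₁ + (s₂−s₂′)ω₂ ∉ πℤ`. -/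
theorem symmetrizing_kernel_charFun_vanishes_off_lines
    (Φ : Finset ℂ) (hΦ : 2 ≤ Φ.card)
    (M : ℕ) (hM : 0 < M) (hMeven : Even M) (v : ℝ≥0) (hv : 0 < v)
    (F : ℂ → Measure ℂ) (hF : ∀ s ∈ Φ, IsProbabilityMeasure (F s))
    (hsym : ∀ s ∈ Φ, ∀ s' ∈ Φ,
      Measure.map (fun q : ℂ × ℝ × ℂ => s + q.1 * Complex.exp (Complex.I * q.2.1) + q.2.2)
        ((F s').prod ((phaseLaw M).prod (gaussComplexLaw v))) =
      Measure.map (fun q : ℂ × ℝ × ℂ => s' + q.1 * Complex.exp (Complex.I * q.2.1) + q.2.2)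
        ((F s).prod ((phaseLaw M).prod (gaussComplexLaw v)))) :
    ∀ s ∈ Φ, ∀ s' ∈ Φ, s ≠ s' →
      ∀ w : ℝ × ℝ,
        (∀ n : ℤ, (s.re - s'.re) * w.1 + (s.im - s'.im) * w.2 ≠ n * Real.pi) →
        charFunC
          (Measure.map (fun q : ℂ × ℝ => q.1 * Complex.exp (Complex.I * q.2))
            ((F s).prod (phaseLaw M))) w = 0 :=
  symmetrizing_kernel_charFun_vanishes_off_lines_general Φ M hM hMeven v F hF hsym
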